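/- Define the territory T(p/q) of a positive irreducible fraction p/q with p even and standard expansion [a_0,...,a_n] as the open interval with endpoints [a_0,...,a_{n-1}, a_n - 1] and [a_0,...,a_{n-1}, ∞] = [a_0,...,a_{n-1}] (ordered appropriately depending on the parity of n). Then p/q ∈ T(p/q), every child of p/q lies in T(p/q), and M(p/q) ∉ T(p/q). -/

import Mathlib

/-- Evaluate the continued fraction `[a_0, …, a_{n-1}, x]` projectively:
the pair `(u, w)` represents the fraction `u/w` (with `(±1, 0)` representing
`∞`), and `[a, rest] = a + 1/rest` corresponds to `(u,w) ↦ (a*u + w, u)`. -/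
def cfFold (l : List ℤ) (x : ℤ × ℤ) : ℤ × ℤ :=
  l.foldr (fun a y => (a * y.1 + y.2, y.1)) x

/-- The coprime pair `(numerator, denominator)` of the continued fraction
`[a_0, …, a_n]`; the empty continued fraction is `∞ = (1, 0)`. -/
def cfPair (l : List ℤ) : ℤ × ℤ :=
  cfFold l (1, 0)

/-- The rational number represented by a pair. -/
def pairQ (x : ℤ × ℤ) : ℚ :=
  (x.1 : ℚ) / (x.2 : ℚ)

/-- The value of the continued fraction `[a_0, …, a_n]` as a rational number. -/
def cfVal (l : List ℤ) : ℚ :=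
  pairQ (cfPair l)

/-- `l = [a_0, …, a_n]` is a standard continued fraction expansion:
`a_0 ≥ 0`, `a_i ≥ 1` for `1 ≤ i ≤ n`, and `a_n ≥ 2`. -/
def IsStdCF (l : List ℤ) : Prop :=
  l ≠ [] ∧ 0 ≤ l.head! ∧ (∀ b ∈ l.tail, 1 ≤ b) ∧ 2 ≤ l.getLast!

/-- The coprime-up-to-sign pair representing the continued fraction
`[a_0, …, a_{n-1}, a_n + 2/t]` with rational last entry
`a + 2/t = (a*t + 2)/t` (for odd `t` the pair `(a*t + 2, t)` is coprime). -/
def childPair (l : List ℤ) (a t : ℤ) : ℤ × ℤ :=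
  cfFold l (a * t + 2, t)

/-- The open interval of rationals between the fractions represented by the
pairs `P` and `Q` (ordered appropriately); if one endpoint is `∞`
(denominator `0`), the interval is unbounded above. -/
def pairItv (P Q : ℤ × ℤ) : Set ℚ :=
  if P.2 = 0 then Set.Ioi (pairQ Q)
  else if Q.2 = 0 then Set.Ioi (pairQ P)
  else Set.Ioo (min (pairQ P) (pairQ Q)) (max (pairQ P) (pairQ Q))

/-- The territory `T(p/q)` of a fraction with standard continued fraction
expansion `l ++ [a]`: the open interval with endpoints
`[a_0, …, a_{n-1}, a_n - 1]` and `[a_0, …, a_{n-1}, ∞] = [a_0, …, a_{n-1}]`. -/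
def territory (l : List ℤ) (a : ℤ) : Set ℚ :=
  pairItv (cfFold l (a - 1, 1)) (cfPair l)

/-- The territory of the child `[a_0, …, a_{n-1}, a_n + 2/t]` of
`l ++ [a]`: the open interval with endpoints
`[a_0, …, a_{n-1}, a_n + 2/(t+1)]` and `[a_0, …, a_{n-1}, a_n + 2/(t-1)]`. -/
def childTerritory (l : List ℤ) (a t : ℤ) : Set ℚ :=
  pairItv (cfFold l (a * (t + 1) + 2, t + 1)) (cfFold l (a * (t - 1) + 2, t - 1))

/-!
Write `cfFold l (u, w) = (u A + w B, u C + w D)`.  For a list of nonnegative entries one has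
`A, B, C, D ≥ 0` and `A D - B C = ±1`, so `x ↦ (A x + B) / (C x + D)` is strictly monotone
on `[0, ∞)` with limit `A / C` at `∞`.  The territory is therefore the image of `(a - 1, ∞)`, and a
value `[a_0, …, a_{n-1}, x]` with `x ≥ 0` lies in it iff `x > a - 1`.  This holds for `x = a`
and for the children, where `x = a + 2 / t` with `2 / t > -1`, but not for the mother, `x = a - 2`.
-/

lemma cfFold_cons (b : ℤ) (l : List ℤ) (x : ℤ × ℤ) :
    cfFold (b :: l) x = (b * (cfFold l x).1 + (cfFold l x).2, (cfFold l x).1) := rfl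

lemma cfPair_append_singleton (l : List ℤ) (a : ℤ) : cfPair (l ++ [a]) = cfFold l (a, 1) := by
  simp [cfPair, cfFold, List.foldr_append]

lemma cfFold_mk (l : List ℤ) (u w : ℤ) :
    cfFold l (u, w) = (u * (cfPair l).1 + w * (cfFold l (0, 1)).1,
      u * (cfPair l).2 + w * (cfFold l (0, 1)).2) := by
  induction l with
  | nil => simp [cfPair, cfFold]
  | cons b l ih =>
    simp only [cfPair, cfFold_cons] at ih ⊢
    rw [ih]
    ext <;> ring

lemma cfFold_det (l : List ℤ) :
    (cfPair l).1 * (cfFold l (0, 1)).2 - (cfFold l (0, 1)).1 * (cfPair l).2 = (-1) ^ l.length := by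
  induction l with
  | nil => simp [cfPair, cfFold]
  | cons b l ih =>
    simp only [cfPair, cfFold_cons, List.length_cons, pow_succ] at ih ⊢
    linear_combination (-1 : ℤ) * ih

lemma cfFold_nonneg {l : List ℤ} (hl : ∀ b ∈ l, 0 ≤ b) {x : ℤ × ℤ} (hx : 0 ≤ x) :
    0 ≤ cfFold l x := by
  induction l with
  | nil => exact hx
  | cons b l ih =>
    obtain ⟨h₁, h₂⟩ := ih fun c hc => hl c (List.mem_cons_of_mem b hc)
    have hb := hl b List.mem_cons_self
    exact ⟨add_nonneg (mul_nonneg hb h₁) h₂, h₁⟩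

lemma IsStdCF.append_singleton {l : List ℤ} {a : ℤ} (h : IsStdCF (l ++ [a])) :
    (∀ b ∈ l, 0 ≤ b) ∧ 2 ≤ a := by
  obtain ⟨-, hhead, htail, hlast⟩ := h
  refine ⟨fun b hb => ?_, by simpa using hlast⟩
  obtain ⟨c, l, rfl⟩ := List.exists_cons_of_ne_nil (List.ne_nil_of_mem hb)
  rcases List.mem_cons.1 hb with rfl | hb
  · simpa using hhead
  · exact zero_le_one.trans (htail b (by simp [hb]))

lemma mobius_mem_Ioo_iff {A B C D x y : ℚ} (hA : 0 ≤ A) (hB : 0 ≤ B) (hC : 0 < C) (hD : 0 ≤ D)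
    (hdet : A * D - B * C = 1 ∨ A * D - B * C = -1) (hx : 0 ≤ x) (hy : 0 < y) :
    (A * x + B) / (C * x + D) ∈ Set.Ioo (min ((A * y + B) / (C * y + D)) (A / C))
      (max ((A * y + B) / (C * y + D)) (A / C)) ↔ y < x := by
  have hCy : 0 < C * y + D := by positivity
  rcases (show 0 ≤ C * x + D by positivity).eq_or_lt with hCx | hCx
  -- `C x + D = 0` forces `x = D = 0`; the value is then the junk `_ / 0 = 0`, below both endpoints.
  · have hx0 : x = 0 := by nlinarith
    have hlow : 0 ≤ min ((A * y + B) / (C * y + D)) (A / C) :=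
      le_min (by positivity) (by positivity)
    rw [← hCx, div_zero, hx0]
    simp only [Set.mem_Ioo, not_lt.2 hy.le, iff_false, not_and_or, not_lt]
    exact Or.inl hlow
  have hsub : (A * x + B) / (C * x + D) - (A * y + B) / (C * y + D)
      = (A * D - B * C) * (x - y) / ((C * x + D) * (C * y + D)) := by
    rw [div_sub_div _ _ hCx.ne' hCy.ne']
    congr 1
    ring
  have hlim : ∀ z, 0 < C * z + D →
      A / C - (A * z + B) / (C * z + D) = (A * D - B * C) / (C * (C * z + D)) := by
    intro z hz
    rw [div_sub_div _ _ hC.ne' hz.ne']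
    congr 1
    ring
  rcases hdet with hdet | hdet <;> rw [hdet] at hsub hlim
  · have hx_lt : (A * x + B) / (C * x + D) < A / C := by
      rw [← sub_pos, hlim x hCx]; positivity
    have hy_lt : (A * y + B) / (C * y + D) < A / C := by
      rw [← sub_pos, hlim y hCy]; positivity
    rw [min_eq_left hy_lt.le, max_eq_right hy_lt.le, Set.mem_Ioo, and_iff_left hx_lt, ← sub_pos,
      hsub, one_mul, div_pos_iff_of_pos_right (by positivity), sub_pos]
  · have hx_lt : A / C < (A * x + B) / (C * x + D) := by
      rw [← sub_neg, hlim x hCx, neg_div, neg_lt_zero]; positivity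
    have hy_lt : A / C < (A * y + B) / (C * y + D) := by
      rw [← sub_neg, hlim y hCy, neg_div, neg_lt_zero]; positivity
    rw [min_eq_right hy_lt.le, max_eq_left hy_lt.le, Set.mem_Ioo, and_iff_right hx_lt, ← sub_neg,
      hsub, neg_one_mul, neg_div, neg_lt_zero, div_pos_iff_of_pos_right (by positivity), sub_pos]

lemma pairQ_cfFold (l : List ℤ) {u w : ℤ} (hw : w ≠ 0) :
    pairQ (cfFold l (u, w)) = ((cfPair l).1 * (u / w : ℚ) + (cfFold l (0, 1)).1) /
      ((cfPair l).2 * (u / w : ℚ) + (cfFold l (0, 1)).2) := by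
  have hw' : (w : ℚ) ≠ 0 := Int.cast_ne_zero.2 hw
  rw [cfFold_mk, pairQ, eq_comm, ← mul_div_mul_right _ _ hw']
  push_cast
  congr 1 <;> field_simp

theorem pairQ_cfFold_mem_territory_iff {l : List ℤ} (hl : ∀ b ∈ l, 0 ≤ b) {a : ℤ} (ha : 2 ≤ a)
    {u w : ℤ} (hw : w ≠ 0) (hx : 0 ≤ (u / w : ℚ)) :
    pairQ (cfFold l (u, w)) ∈ territory l a ↔ (a - 1 : ℚ) < u / w := by
  obtain ⟨hA, hC⟩ : 0 ≤ (cfPair l).1 ∧ 0 ≤ (cfPair l).2 :=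
    cfFold_nonneg hl ⟨zero_le_one, le_rfl⟩
  obtain ⟨hB, hD⟩ : 0 ≤ (cfFold l (0, 1)).1 ∧ 0 ≤ (cfFold l (0, 1)).2 :=
    cfFold_nonneg hl ⟨le_rfl, zero_le_one⟩
  have hdet := cfFold_det l ▸ neg_one_pow_eq_or ℤ l.length
  unfold territory pairItv
  rw [pairQ_cfFold l hw, pairQ_cfFold l one_ne_zero, cfFold_mk l (a - 1) 1]
  simp only [pairQ, Int.cast_one, div_one, Int.cast_sub, one_mul]
  generalize cfPair l = P at *
  generalize cfFold l (0, 1) = Q at *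
  obtain ⟨A, C⟩ := P
  obtain ⟨B, D⟩ := Q
  dsimp only at *
  rcases hC.eq_or_lt with rfl | hC
  -- `C = 0` (e.g. `l = []`): then `A = D = 1` and the map is the translation `x ↦ x + B`.
  · have hAD : A * D = 1 := by rcases hdet with h | h <;> nlinarith
    obtain rfl : A = 1 := Int.eq_one_of_mul_eq_one_right hA hAD
    obtain rfl : D = 1 := by simpa using hAD
    simp
  · have hP : (a - 1) * C + D ≠ 0 := by nlinarith
    rw [if_neg hP, if_neg hC.ne']
    have ha' : (2 : ℚ) ≤ a := by exact_mod_cast ha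
    exact mobius_mem_Ioo_iff (by exact_mod_cast hA) (by exact_mod_cast hB)
      (by exact_mod_cast hC) (by exact_mod_cast hD) (by exact_mod_cast hdet) hx (by linarith)

lemma neg_one_lt_two_div_of_odd {t : ℤ} (ht : Odd t) (ht1 : t ≠ -1) : -1 < (2 / t : ℚ) := by
  obtain ⟨k, rfl⟩ := ht
  rcases lt_or_gt_of_ne (show 2 * k + 1 ≠ 0 by omega) with hneg | hpos
  · rw [lt_div_iff_of_neg (by exact_mod_cast hneg)]
    have : (2 * k + 1 : ℚ) ≤ -3 := by exact_mod_cast (show 2 * k + 1 ≤ -3 by omega)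
    push_cast
    linarith
  · exact neg_one_lt_zero.trans (div_pos two_pos (by exact_mod_cast hpos))

theorem territory_mem_general (p q : ℤ) (l : List ℤ) (a : ℤ) (hstd : IsStdCF (l ++ [a]))
    (hval : cfPair (l ++ [a]) = (p, q)) :
    (p : ℚ) / q ∈ territory l a ∧
    (∀ t : ℤ, Odd t → t ≠ -1 → pairQ (childPair l a t) ∈ territory l a) ∧
    cfVal (l ++ [a - 2]) ∉ territory l a := by
  obtain ⟨hl, ha⟩ := hstd.append_singleton
  have ha' : (2 : ℚ) ≤ a := by exact_mod_cast ha
  rw [cfPair_append_singleton] at hval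
  refine ⟨?_, fun t ht ht1 => ?_, ?_⟩
  · rw [show (p : ℚ) / q = pairQ (cfFold l (a, 1)) by rw [hval]; rfl,
      pairQ_cfFold_mem_territory_iff hl ha one_ne_zero (by push_cast; linarith)]
    simp
  · have ht0 : t ≠ 0 := by rintro rfl; simp at ht
    have hchild : ((a * t + 2 : ℤ) : ℚ) / t = a + 2 / t := by
      have : (t : ℚ) ≠ 0 := by exact_mod_cast ht0
      push_cast
      field_simp
    have h2t := neg_one_lt_two_div_of_odd ht ht1
    rw [childPair, pairQ_cfFold_mem_territory_iff hl ha ht0 (by rw [hchild]; linarith), hchild]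
    linarith
  · rw [cfVal, cfPair_append_singleton, pairQ_cfFold_mem_territory_iff hl ha one_ne_zero
      (by push_cast; linarith)]
    simp

/-- Let `p/q` be a positive irreducible fraction with `p` even and standard
continued fraction expansion `l ++ [a]`.  Then `p/q` lies in its territory,
every child `[a_0, …, a_{n-1}, a_n + 2/t]` (odd `t ≠ -1`) lies in the
territory, and the mother `M(p/q) = [a_0, …, a_{n-1}, a_n - 2]` does not. -/
theorem territory_mem (p q : ℤ) (hp : 0 < p) (hq : 0 < q)
    (hco : Int.gcd p q = 1) (hev : 2 ∣ p)
    (l : List ℤ) (a : ℤ) (hstd : IsStdCF (l ++ [a]))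
    (hval : cfPair (l ++ [a]) = (p, q)) :
    (p : ℚ) / q ∈ territory l a ∧
    (∀ t : ℤ, Odd t → t ≠ -1 → pairQ (childPair l a t) ∈ territory l a) ∧
    cfVal (l ++ [a - 2]) ∉ territory l a :=
  territory_mem_general p q l a hstd hval
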